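/- arXiv:1510.08477 — 3 statements merged into one kernel-verified Lean document; each statement's English description precedes it below -/
import Mathlib

section
/- Let E be a convex polygon with η_E the minimal number of lines covering its boundary, and let k ≥ η_E. If a polynomial p of degree ≤ k vanishes on ∂E and satisfies ∫_E p·q dE = 0 for all polynomials q of degree ≤ k − η_E, then p ≡ 0. -/
/-!
Each boundary line carries an edge of `E` on which `p` vanishes; restricted to that line `p` is a
univariate polynomial with infinitely many roots, so the line's affine form `ℓᵢ` divides `p`. The
`ℓᵢ` are pairwise non-associate irreducibles, hence `b_E = ∏ ℓᵢ` divides `p`: `p = b_E q` with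
`deg q ≤ k - η`. No `ℓᵢ` vanishes in the interior of the convex set `E`, so `b_E` has constant sign
there, and the moment condition for `q` reads `∫_E b_E q² = 0`. Hence `q` vanishes on the nonempty
open set `interior E`, so `q = 0`.
-/

open MvPolynomial MeasureTheory

lemma MvPolynomial.eval_aeval {σ τ R : Type*} [CommSemiring R] (x : τ → R)
    (g : σ → MvPolynomial τ R) (f : MvPolynomial σ R) :
    eval x (aeval g f) = eval (fun i => eval x (g i)) f := by
  rw [aeval_eq_bind₁]
  exact eval₂Hom_bind₁ _ _ _ _

lemma MvPolynomial.dvd_sub_aeval {σ R : Type*} [CommRing R] {ℓ : MvPolynomial σ R}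
    {g : σ → MvPolynomial σ R} (hg : ∀ i, ℓ ∣ X i - g i) (f : MvPolynomial σ R) :
    ℓ ∣ f - aeval g f := by
  rw [← Ideal.mem_span_singleton, ← Ideal.Quotient.eq, ← Ideal.Quotient.mkₐ_eq_mk R,
    ← AlgHom.comp_apply]
  conv_lhs => rw [← AlgHom.id_apply (R := R) f, ← AlgHom.comp_apply]
  congr 1
  refine algHom_ext fun i => ?_
  simpa [Ideal.Quotient.eq, Ideal.mem_span_singleton] using hg i

lemma MvPolynomial.totalDegree_prod_of_isDomain {ι σ R : Type*} [CommRing R] [IsDomain R]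
    (s : Finset ι) {f : ι → MvPolynomial σ R} (hf : ∀ i ∈ s, f i ≠ 0) :
    (∏ i ∈ s, f i).totalDegree = ∑ i ∈ s, (f i).totalDegree := by
  classical
  induction s using Finset.induction_on with
  | empty => simp
  | insert j s hj ih =>
    rw [Finset.prod_insert hj, Finset.sum_insert hj, totalDegree_mul_of_isDomain
      (hf j (s.mem_insert_self j)) (Finset.prod_ne_zero_iff.2 fun i hi =>
        hf i (Finset.mem_insert_of_mem hi)), ih fun i hi => hf i (Finset.mem_insert_of_mem hi)]

lemma MvPolynomial.eval_lineMap_eq_zero_of_segment {σ : Type*} {f : MvPolynomial σ ℝ}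
    {u v : σ → ℝ}
    (hf : ∀ z ∈ segment ℝ u v, eval z f = 0) (t : ℝ) :
    eval (AffineMap.lineMap u v t) f = 0 := by
  set r : Polynomial ℝ :=
    aeval (fun i => Polynomial.C (u i) + Polynomial.X * Polynomial.C (v i - u i)) f
  have hr (s : ℝ) : r.eval s = eval (AffineMap.lineMap u v s) f := by
    rw [← Polynomial.coe_aeval_eq_eval, ← AlgHom.comp_apply, comp_aeval, ← coe_aeval_eq_eval]
    show aeval _ f = aeval _ f
    congr 2
    funext i
    simp only [map_sub, Polynomial.coe_aeval_eq_eval, Polynomial.eval_add, Polynomial.eval_C,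
      Polynomial.eval_mul, Polynomial.eval_X, Polynomial.eval_sub,
      AffineMap.lineMap_apply_module', Pi.add_apply, Pi.smul_apply, Pi.sub_apply, smul_eq_mul]
    ring
  have hr0 : r = 0 := Polynomial.eq_zero_of_infinite_isRoot r <|
    (Set.Icc_infinite zero_lt_one).mono fun s hs => by
      rw [Set.mem_ofPred_eq, Polynomial.IsRoot, hr]
      exact hf _ (segment_eq_image_lineMap ℝ u v ▸ ⟨s, hs, rfl⟩)
  rw [← hr, hr0, Polynomial.eval_zero]

lemma MvPolynomial.eq_zero_of_eval_eq_zero_on_open {ι : Type*} [Fintype ι]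
    {U : Set (ι → ℝ)} (hU : IsOpen U) (hne : U.Nonempty) {q : MvPolynomial ι ℝ}
    (h : ∀ x ∈ U, eval x q = 0) : q = 0 := by
  obtain ⟨x, hx⟩ := hne
  obtain ⟨ε, hε, hball⟩ := Metric.isOpen_iff.1 hU x hx
  refine funext_set (fun i => Metric.ball (x i) ε) (fun i => ?_) fun y hy => ?_
  · rw [Real.ball_eq_Ioo]
    exact Set.Ioo_infinite (by linarith)
  · rw [h y (hball (ball_pi x hε ▸ hy)), map_zero]

lemma Convex.notMem_affineSpan_pair_of_segment_subset_frontier {V : Type*} [AddCommGroup V]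
    [Module ℝ V] [TopologicalSpace V] [IsTopologicalAddGroup V] [ContinuousConstSMul ℝ V]
    {E : Set V} (hconv : Convex ℝ E) {u v x : V} (huv : u ≠ v)
    (hseg : segment ℝ u v ⊆ frontier E) (hx : x ∈ interior E) : x ∉ line[ℝ, u, v] := by
  intro hxuv
  have hu : u ∈ frontier E := hseg (left_mem_segment ℝ u v)
  have hv : v ∈ frontier E := hseg (right_mem_segment ℝ u v)
  have hxu : x ≠ u := fun h => hu.2 (h ▸ hx)
  have hxv : x ≠ v := fun h => hv.2 (h ▸ hx)
  rcases (collinear_insert_of_mem_affineSpan_pair hxuv).wbtw_or_wbtw_or_wbtw with h | h | h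
  · refine hu.2 (hconv.openSegment_interior_closure_subset_interior hx hv.1 ?_)
    exact mem_openSegment_of_ne_left_right hxu huv.symm h.mem_segment
  · refine hv.2 (hconv.openSegment_interior_closure_subset_interior hx hu.1 ?_)
    rw [openSegment_symm]
    exact mem_openSegment_of_ne_left_right huv hxv h.mem_segment
  · exact (hseg (segment_symm ℝ u v ▸ h.mem_segment)).2 hx

lemma IsPreconnected.forall_pos_or_forall_neg {X : Type*} [TopologicalSpace X] {s : Set X}
    (hs : IsPreconnected s) {w : X → ℝ} (hw : ContinuousOn w s) (hw0 : ∀ x ∈ s, w x ≠ 0) :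
    (∀ x ∈ s, 0 < w x) ∨ ∀ x ∈ s, w x < 0 := by
  by_contra! h
  obtain ⟨⟨x, hx, hwx⟩, y, hy, hwy⟩ := h
  obtain ⟨z, hz, hwz⟩ := hs.intermediate_value hx hy hw ⟨hwx, hwy⟩
  exact hw0 z hz hwz

lemma Convex.eqOn_zero_of_setIntegral_eq_zero {V : Type*} [NormedAddCommGroup V]
    [NormedSpace ℝ V] [MeasurableSpace V] [BorelSpace V] [FiniteDimensional ℝ V]
    {μ : Measure V} [μ.IsAddHaarMeasure] {E : Set V} (hconv : Convex ℝ E) {g : V → ℝ}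
    (hg : Continuous g) (hint : IntegrableOn g E μ) (hnn : ∀ x ∈ interior E, 0 ≤ g x)
    (h : ∫ x in E, g x ∂μ = 0) : Set.EqOn g 0 (interior E) := by
  have hE := interior_ae_eq_of_null_frontier (hconv.addHaar_frontier μ)
  rw [← setIntegral_congr_set hE] at h
  refine Measure.eqOn_open_of_ae_eq (μ := μ) ?_ isOpen_interior hg.continuousOn continuousOn_const
  refine (setIntegral_eq_zero_iff_of_nonneg_ae ?_ (hint.congr_set_ae hE)).1 h
  exact (ae_restrict_iff' isOpen_interior.measurableSet).2 (.of_forall hnn)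

lemma MvPolynomial.eq_zero_of_setIntegral_mul_sq_eq_zero {ι : Type*} [Fintype ι]
    {E : Set (ι → ℝ)} (hconv : Convex ℝ E) (hbd : Bornology.IsBounded E)
    (hvol : 0 < volume E)
    {w : (ι → ℝ) → ℝ} (hw : Continuous w) (hw0 : ∀ x ∈ interior E, w x ≠ 0)
    {q : MvPolynomial ι ℝ} (h : ∫ x in E, w x * eval x q ^ 2 = 0) : q = 0 := by
  wlog hpos : ∀ x ∈ interior E, 0 < w x generalizing w
  · have hneg := (hconv.interior.isPreconnected.forall_pos_or_forall_neg hw.continuousOn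
      hw0).resolve_left hpos
    refine this hw.neg (fun x hx => neg_ne_zero.2 (hw0 x hx)) ?_ fun x hx => neg_pos.2 (hneg x hx)
    simp [neg_mul, integral_neg, h]
  have hg : Continuous fun x => w x * eval x q ^ 2 := hw.mul ((continuous_eval q).pow 2)
  have hint : IntegrableOn (fun x => w x * eval x q ^ 2) E :=
    (hg.continuousOn.integrableOn_compact hbd.isCompact_closure).mono_set subset_closure
  have hzero := hconv.eqOn_zero_of_setIntegral_eq_zero hg hint
    (fun x hx => mul_nonneg (hpos x hx).le (sq_nonneg _)) h
  have hne : (interior E).Nonempty := nonempty_of_measure_ne_zero <|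
    (measure_interior_of_null_frontier (hconv.addHaar_frontier volume)).symm ▸ hvol.ne'
  refine eq_zero_of_eval_eq_zero_on_open isOpen_interior hne fun x hx => ?_
  simpa [(hpos x hx).ne'] using hzero hx

noncomputable def lineForm (a b c : ℝ) : MvPolynomial (Fin 2) ℝ := C a * X 0 + C b * X 1 + C c

@[simp]
lemma eval_lineForm (a b c : ℝ) (z : Fin 2 → ℝ) :
    eval z (lineForm a b c) = a * z 0 + b * z 1 + c := by
  simp [lineForm]

lemma C_mul_lineForm (t a b c : ℝ) :
    C t * lineForm a b c = lineForm (t * a) (t * b) (t * c) := by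
  simp only [lineForm, map_mul]
  ring

lemma lineForm_inj {a b c a' b' c' : ℝ} (h : lineForm a b c = lineForm a' b' c') :
    a = a' ∧ b = b' ∧ c = c' := by
  have h₀ := congrArg (eval ![0, 0]) h
  have h₁ := congrArg (eval ![1, 0]) h
  have h₂ := congrArg (eval ![0, 1]) h
  simp only [eval_lineForm, Matrix.cons_val_zero, Matrix.cons_val_one] at h₀ h₁ h₂
  refine ⟨by linarith, by linarith, by linarith⟩

lemma totalDegree_lineForm {a b c : ℝ} (hab : a ≠ 0 ∨ b ≠ 0) :
    (lineForm a b c).totalDegree = 1 := by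
  refine le_antisymm ?_ (Nat.one_le_iff_ne_zero.2 fun h => ?_)
  · have hmon (r : ℝ) (i : Fin 2) : (C r * X i : MvPolynomial (Fin 2) ℝ).totalDegree ≤ 1 :=
      (totalDegree_mul _ _).trans (by simp [totalDegree_C, totalDegree_X])
    refine (totalDegree_add _ _).trans (max_le ((totalDegree_add _ _).trans
      (max_le (hmon a 0) (hmon b 1))) ?_)
    simp [totalDegree_C]
  · obtain ⟨r, hr⟩ : ∃ r, lineForm a b c = lineForm 0 0 r :=
      ⟨coeff 0 (lineForm a b c), (totalDegree_eq_zero_iff_eq_C.1 h).trans (by simp [lineForm])⟩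
    obtain ⟨rfl, rfl, -⟩ := lineForm_inj hr
    simp at hab

lemma lineForm_ne_zero {a b c : ℝ} (hab : a ≠ 0 ∨ b ≠ 0) : lineForm a b c ≠ 0 := by
  intro h
  simpa [h] using totalDegree_lineForm (c := c) hab

lemma irreducible_lineForm {a b c : ℝ} (hab : a ≠ 0 ∨ b ≠ 0) :
    Irreducible (lineForm a b c) :=
  irreducible_of_totalDegree_eq_one (totalDegree_lineForm hab) fun r hr =>
    isUnit_iff_ne_zero.2 <| by
      rintro rfl
      exact lineForm_ne_zero hab (MvPolynomial.ext _ _ fun m => zero_dvd_iff.1 (hr m))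

lemma isRelPrime_lineForm {a b c a' b' c' : ℝ} (hab : a ≠ 0 ∨ b ≠ 0)
    (hab' : a' ≠ 0 ∨ b' ≠ 0)
    (hne : ¬ ∃ t : ℝ, a' = t * a ∧ b' = t * b ∧ c' = t * c) :
    IsRelPrime (lineForm a b c) (lineForm a' b' c') := by
  refine (irreducible_lineForm hab).isRelPrime_iff_not_dvd.2 fun ⟨m, hm⟩ => hne ?_
  have hm0 : m ≠ 0 := by rintro rfl; exact lineForm_ne_zero hab' (by simpa using hm)
  have hdeg := congrArg totalDegree hm
  rw [totalDegree_mul_of_isDomain (lineForm_ne_zero hab) hm0, totalDegree_lineForm hab,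
    totalDegree_lineForm hab', left_eq_add, totalDegree_eq_zero_iff_eq_C] at hdeg
  rw [hdeg, mul_comm, C_mul_lineForm] at hm
  exact ⟨_, lineForm_inj hm⟩

lemma lineForm_dvd_of_eval_eq_zero {a b c : ℝ} (hab : a ≠ 0 ∨ b ≠ 0)
    {f : MvPolynomial (Fin 2) ℝ}
    (hf : ∀ z : Fin 2 → ℝ, a * z 0 + b * z 1 + c = 0 → eval z f = 0) :
    lineForm a b c ∣ f := by
  obtain ⟨j, hj⟩ : ∃ j, ![a, b] j ≠ 0 := hab.elim (⟨0, ·⟩) (⟨1, ·⟩)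
  -- `aeval g` substitutes for `X j` its value on the line: `eval x (aeval g f)` is `f` at the
  -- projection of `x` onto the line along the `j`-th axis.
  set g := Function.update X j (X j - C (![a, b] j)⁻¹ * lineForm a b c)
  have hdvd := dvd_sub_aeval (ℓ := lineForm a b c) (g := g) (fun i => by
    rcases eq_or_ne i j with rfl | hi
    · simp [g]
    · simp [g, hi]) f
  suffices aeval g f = 0 by rwa [this, sub_zero] at hdvd
  refine MvPolynomial.funext fun x => ?_
  rw [eval_aeval, map_zero]
  apply hf
  fin_cases j <;>
    simp only [Fin.zero_eta, Fin.mk_one, Fin.isValue, Matrix.cons_val_zero, Matrix.cons_val_one,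
      Matrix.cons_val_fin_one, ne_eq, Function.update_self, Function.update_of_ne, zero_ne_one,
      one_ne_zero, not_false_eq_true, map_sub, map_mul, eval_X, eval_C, eval_lineForm, g]
      at hj ⊢ <;>
    field_simp <;> ring

lemma exists_lineMap_eq_of_eval_lineForm {a b c : ℝ} (hab : a ≠ 0 ∨ b ≠ 0)
    {u v z : Fin 2 → ℝ} (huv : u ≠ v) (hu : a * u 0 + b * u 1 + c = 0)
    (hv : a * v 0 + b * v 1 + c = 0) (hz : a * z 0 + b * z 1 + c = 0) :
    ∃ t : ℝ, AffineMap.lineMap u v t = z := by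
  obtain ⟨d, rfl⟩ : ∃ d, v = u + d := ⟨v - u, by abel⟩
  obtain ⟨e, rfl⟩ : ∃ e, z = u + e := ⟨z - u, by abel⟩
  have hd : d 0 ^ 2 + d 1 ^ 2 ≠ 0 := by
    intro h
    refine huv (funext fun i => ?_)
    have : d i = 0 := by
      fin_cases i <;> simp only [Fin.zero_eta, Fin.mk_one, Fin.isValue] <;>
        nlinarith [sq_nonneg (d 0), sq_nonneg (d 1)]
    simp [this]
  -- `d` and `e` are both orthogonal to `(a, b) ≠ 0`, hence parallel.
  have hdet : d 0 * e 1 - d 1 * e 0 = 0 := by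
    have hd' : a * d 0 + b * d 1 = 0 := by simp only [Pi.add_apply] at hu hv; linarith
    have he' : a * e 0 + b * e 1 = 0 := by simp only [Pi.add_apply] at hu hz; linarith
    rcases hab with ha | hb
    · exact (mul_right_inj' ha).1 (by linear_combination e 1 * hd' - d 1 * he')
    · exact (mul_right_inj' hb).1 (by linear_combination d 0 * he' - e 0 * hd')
  refine ⟨(d 0 * e 0 + d 1 * e 1) / (d 0 ^ 2 + d 1 ^ 2), funext fun i => ?_⟩
  rw [AffineMap.lineMap_apply_module', add_sub_cancel_left]
  fin_cases i <;>
    simp only [Fin.zero_eta, Fin.mk_one, Fin.isValue, Pi.add_apply, Pi.smul_apply, smul_eq_mul] <;>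
    field_simp
  · linear_combination d 1 * hdet
  · linear_combination - d 0 * hdet

lemma lineForm_dvd_of_segment {a b c : ℝ} (hab : a ≠ 0 ∨ b ≠ 0) {u v : Fin 2 → ℝ}
    (huv : u ≠ v) (hline : ∀ z ∈ segment ℝ u v, a * z 0 + b * z 1 + c = 0)
    {f : MvPolynomial (Fin 2) ℝ}
    (hf : ∀ z ∈ segment ℝ u v, eval z f = 0) : lineForm a b c ∣ f :=
  lineForm_dvd_of_eval_eq_zero hab fun z hz => by
    obtain ⟨t, rfl⟩ := exists_lineMap_eq_of_eval_lineForm hab huv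
      (hline u (left_mem_segment ℝ u v)) (hline v (right_mem_segment ℝ u v)) hz
    exact eval_lineMap_eq_zero_of_segment hf t

lemma Convex.eval_lineForm_ne_zero_of_mem_interior {E : Set (Fin 2 → ℝ)} (hconv : Convex ℝ E)
    {a b c : ℝ} (hab : a ≠ 0 ∨ b ≠ 0) {u v : Fin 2 → ℝ} (huv : u ≠ v)
    (hseg : segment ℝ u v ⊆ frontier E)
    (hline : ∀ z ∈ segment ℝ u v, a * z 0 + b * z 1 + c = 0) {x : Fin 2 → ℝ}
    (hx : x ∈ interior E) : eval x (lineForm a b c) ≠ 0 := by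
  rw [eval_lineForm]
  intro hx0
  obtain ⟨t, rfl⟩ := exists_lineMap_eq_of_eval_lineForm hab huv
    (hline u (left_mem_segment ℝ u v)) (hline v (right_mem_segment ℝ u v)) hx0
  exact hconv.notMem_affineSpan_pair_of_segment_subset_frontier huv hseg hx
    (AffineMap.lineMap_mem_affineSpan_pair t u v)

theorem stmt_4_general (k η : ℕ)
    (E : Set (Fin 2 → ℝ)) (hconv : Convex ℝ E) (hbd : Bornology.IsBounded E)
    (hvol : 0 < volume E)
    (L : Fin η → ℝ × ℝ × ℝ)
    (hL0 : ∀ i, ((L i).1, (L i).2.1) ≠ ((0 : ℝ), (0 : ℝ)))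
    (hdist : ∀ i j, i ≠ j →
      ¬ ∃ t : ℝ, (L j).1 = t * (L i).1 ∧ (L j).2.1 = t * (L i).2.1 ∧
        (L j).2.2 = t * (L i).2.2)
    (hedge : ∀ i, ∃ u v : Fin 2 → ℝ, u ≠ v ∧ segment ℝ u v ⊆ frontier E ∧
      ∀ z ∈ segment ℝ u v, (L i).1 * z 0 + (L i).2.1 * z 1 + (L i).2.2 = 0)
    (p : MvPolynomial (Fin 2) ℝ) (hp : p.totalDegree ≤ k)
    (hvan : ∀ z ∈ frontier E, eval z p = 0)
    (hmom : ∀ q : MvPolynomial (Fin 2) ℝ, q.totalDegree ≤ k - η →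
      ∫ x in E, eval x p * eval x q = 0) :
    p = 0 := by
  set ℓ : Fin η → MvPolynomial (Fin 2) ℝ := fun i => lineForm (L i).1 (L i).2.1 (L i).2.2
  have hab i : (L i).1 ≠ 0 ∨ (L i).2.1 ≠ 0 := by simpa [← not_and_or] using hL0 i
  obtain ⟨q, rfl⟩ : ∏ i, ℓ i ∣ p := by
    refine Fintype.prod_dvd_of_isRelPrime
      (fun i j hij => isRelPrime_lineForm (hab i) (hab j) (hdist i j hij)) fun i => ?_
    obtain ⟨u, v, huv, hseg, hline⟩ := hedge i
    exact lineForm_dvd_of_segment (hab i) huv hline fun z hz => hvan z (hseg hz)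
  have hB0 : ∏ i, ℓ i ≠ 0 := Finset.prod_ne_zero_iff.2 fun i _ => lineForm_ne_zero (hab i)
  have hBdeg : (∏ i, ℓ i).totalDegree = η := by
    simp [ℓ, totalDegree_prod_of_isDomain _ fun i _ => lineForm_ne_zero (hab i),
      totalDegree_lineForm (hab _)]
  rcases eq_or_ne q 0 with rfl | hq
  · exact mul_zero _
  have hqdeg : q.totalDegree ≤ k - η := by
    have := totalDegree_mul_of_isDomain hB0 hq
    omega
  refine absurd (eq_zero_of_setIntegral_mul_sq_eq_zero hconv hbd hvol
    (continuous_eval (∏ i, ℓ i)) (fun x hx => ?_) ?_) hq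
  · rw [map_prod]
    refine Finset.prod_ne_zero_iff.2 fun i _ => ?_
    obtain ⟨u, v, huv, hseg, hline⟩ := hedge i
    exact hconv.eval_lineForm_ne_zero_of_mem_interior (hab i) huv hseg hline hx
  · simpa [mul_assoc, sq] using hmom q hqdeg

/-- Unisolvence, convex case: on a convex polygon E (positive area) with boundary
covered by η distinct lines each carrying an edge, if k ≥ η and p ∈ P_k vanishes
on ∂E and has vanishing moments against P_{k-η}(E), then p = 0. -/
theorem stmt_4 (k η : ℕ) (hk : η ≤ k)
    (E : Set (Fin 2 → ℝ)) (hconv : Convex ℝ E) (hbd : Bornology.IsBounded E)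
    (hmeas : MeasurableSet E) (hvol : 0 < volume E)
    (L : Fin η → ℝ × ℝ × ℝ)
    (hL0 : ∀ i, ((L i).1, (L i).2.1) ≠ ((0 : ℝ), (0 : ℝ)))
    (hdist : ∀ i j, i ≠ j →
      ¬ ∃ t : ℝ, (L j).1 = t * (L i).1 ∧ (L j).2.1 = t * (L i).2.1 ∧
        (L j).2.2 = t * (L i).2.2)
    (hB : frontier E ⊆
      ⋃ i, {z : Fin 2 → ℝ | (L i).1 * z 0 + (L i).2.1 * z 1 + (L i).2.2 = 0})
    (hedge : ∀ i, ∃ u v : Fin 2 → ℝ, u ≠ v ∧ segment ℝ u v ⊆ frontier E ∧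
      ∀ z ∈ segment ℝ u v, (L i).1 * z 0 + (L i).2.1 * z 1 + (L i).2.2 = 0)
    (p : MvPolynomial (Fin 2) ℝ) (hp : p.totalDegree ≤ k)
    (hvan : ∀ z ∈ frontier E, eval z p = 0)
    (hmom : ∀ q : MvPolynomial (Fin 2) ℝ, q.totalDegree ≤ k - η →
      ∫ x in E, eval x p * eval x q = 0) :
    p = 0 :=
  stmt_4_general k η E hconv hbd hvol L hL0 hdist hedge p hp hvan hmom
end

section
/- Let V be a finite-dimensional vector space with dual basis (coordinate functionals) δ₁,…,δ_N, let P ⊆ V, and suppose S ≤ N with the first S functionals injective on P via Π defined by the Euclidean least-squares projection. Then the set V^S := {φ ∈ V : δ_r(φ) = δ_r(Πφ) for all r = S+1,…,N} is a linear subspace of V of dimension S, it contains P, and the map φ ↦ (δ₁(φ),…,δ_S(φ)) is an isomorphism from V^S onto ℝ^S. -/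
/-!
Since the first `S` degrees of freedom are injective on `P`, the least-squares condition forces
`Π φ` to be the unique element of `P` whose first `S` degrees of freedom are as close as possible
to those of `φ`; in particular `Π φ` depends only on `δ₁ φ, …, δ_S φ`. An element of `V^S` is
therefore determined by its first `S` degrees of freedom (the remaining ones are those of `Π φ`),
and conversely any values `c ∈ ℝ^S` extend to an element of `V^S` by prescribing the remaining
degrees of freedom to be those of `Π` applied to any `φ` with first degrees of freedom `c`.
-/

open Module

section LeastSquares

variable {𝕜 V ι : Type*} [CommRing 𝕜] [LinearOrder 𝕜] [IsStrictOrderedRing 𝕜]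
  [AddCommGroup V] [Module 𝕜 V] [Fintype ι]

structure IsLeastSquaresProjection (d : ι → V →ₗ[𝕜] 𝕜) (P : Submodule 𝕜 V) (Pr : V →ₗ[𝕜] V) :
    Prop where
  eq_zero_of_dofs_eq_zero : ∀ q ∈ P, (∀ i, d i q = 0) → q = 0
  mem : ∀ φ, Pr φ ∈ P
  orthogonal : ∀ φ, ∀ q ∈ P, ∑ i, d i (Pr φ - φ) * d i q = 0

namespace IsLeastSquaresProjection

variable {d : ι → V →ₗ[𝕜] 𝕜} {P : Submodule 𝕜 V} {Pr : V →ₗ[𝕜] V}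

theorem eq_of_mem_of_dofs_eq (hPr : IsLeastSquaresProjection d P Pr) {φ ψ : V} (hψ : ψ ∈ P)
    (hd : ∀ i, d i ψ = d i φ) : Pr φ = ψ := by
  have hq : Pr φ - ψ ∈ P := P.sub_mem (hPr.mem φ) hψ
  have hdq : ∀ i, d i (Pr φ - φ) = d i (Pr φ - ψ) := fun i => by simp only [map_sub, hd]
  have hsq := hPr.orthogonal φ _ hq
  simp only [hdq, Finset.sum_mul_self_eq_zero_iff, Finset.mem_univ, forall_const] at hsq
  exact sub_eq_zero.mp (hPr.eq_zero_of_dofs_eq_zero _ hq hsq)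

theorem apply_of_mem (hPr : IsLeastSquaresProjection d P Pr) {q : V} (hq : q ∈ P) : Pr q = q :=
  hPr.eq_of_mem_of_dofs_eq hq fun _ => rfl

theorem apply_eq_zero_of_dofs_eq_zero (hPr : IsLeastSquaresProjection d P Pr) {φ : V}
    (hφ : ∀ i, d i φ = 0) : Pr φ = 0 :=
  hPr.eq_of_mem_of_dofs_eq P.zero_mem fun i => by rw [map_zero, hφ]

theorem apply_eq_of_dofs_eq (hPr : IsLeastSquaresProjection d P Pr) {φ φ' : V}
    (hd : ∀ i, d i φ = d i φ') : Pr φ = Pr φ' := by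
  rw [← sub_eq_zero, ← map_sub]
  exact hPr.apply_eq_zero_of_dofs_eq_zero fun i => by rw [map_sub, hd, sub_self]

end IsLeastSquaresProjection

end LeastSquares

section Glue

variable {α : Type*} {N S : ℕ}

def glueDofs (c : Fin S → α) (t : Fin N → α) : Fin N → α :=
  fun r => if h : (r : ℕ) < S then c ⟨r, h⟩ else t r

@[simp]
theorem glueDofs_castLE (hSN : S ≤ N) (c : Fin S → α) (t : Fin N → α) (i : Fin S) :
    glueDofs c t (Fin.castLE hSN i) = c i := by
  simp [glueDofs]

theorem glueDofs_of_le (c : Fin S → α) (t : Fin N → α) {r : Fin N} (hr : S ≤ (r : ℕ)) :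
    glueDofs c t r = t r := by
  simp [glueDofs, hr]

end Glue

section Serendipity

variable {𝕜 V : Type*} [CommRing 𝕜] [AddCommGroup V] [Module 𝕜 V] {N S : ℕ}

def serendipitySpace (δ : Fin N → V →ₗ[𝕜] 𝕜) (S : ℕ) (Pr : V →ₗ[𝕜] V) : Submodule 𝕜 V where
  carrier := {φ | ∀ r : Fin N, S ≤ (r : ℕ) → δ r φ = δ r (Pr φ)}
  add_mem' hφ hψ r hr := by simp only [map_add, hφ r hr, hψ r hr]
  zero_mem' _ _ := by simp only [map_zero]
  smul_mem' c _ hφ r hr := by simp only [map_smul, hφ r hr]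

def serendipityDofs (hSN : S ≤ N) (δ : Fin N → V →ₗ[𝕜] 𝕜) (Pr : V →ₗ[𝕜] V) :
    serendipitySpace δ S Pr →ₗ[𝕜] (Fin S → 𝕜) :=
  LinearMap.pi fun i => δ (Fin.castLE hSN i) ∘ₗ (serendipitySpace δ S Pr).subtype

variable [LinearOrder 𝕜] [IsStrictOrderedRing 𝕜] {δ : Fin N → V →ₗ[𝕜] 𝕜} {P : Submodule 𝕜 V}
  {Pr : V →ₗ[𝕜] V}

theorem IsLeastSquaresProjection.le_serendipitySpace (hSN : S ≤ N)
    (hPr : IsLeastSquaresProjection (fun i : Fin S => δ (Fin.castLE hSN i)) P Pr) :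
    P ≤ serendipitySpace δ S Pr :=
  fun q hq _ _ => by rw [hPr.apply_of_mem hq]

theorem serendipityDofs_injective (hSN : S ≤ N)
    (hδ : Function.Injective fun φ : V => (fun i => δ i φ : Fin N → 𝕜))
    (hPr : IsLeastSquaresProjection (fun i : Fin S => δ (Fin.castLE hSN i)) P Pr) :
    Function.Injective (serendipityDofs hSN δ Pr) := by
  rw [← LinearMap.ker_eq_bot, Submodule.eq_bot_iff]
  rintro ⟨φ, hφW⟩ hφ
  have hdofs : ∀ i : Fin S, δ (Fin.castLE hSN i) φ = 0 := congrFun (LinearMap.mem_ker.mp hφ)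
  have hPrφ : Pr φ = 0 := hPr.apply_eq_zero_of_dofs_eq_zero hdofs
  have hall : ∀ r : Fin N, δ r φ = 0 := by
    intro r
    rcases lt_or_ge (r : ℕ) S with hr | hr
    · exact hdofs ⟨r, hr⟩
    · rw [hφW r hr, hPrφ, map_zero]
  exact Subtype.ext (hδ (funext fun r => (hall r).trans (map_zero _).symm))

theorem serendipityDofs_surjective (hSN : S ≤ N)
    (hδ : Function.Surjective fun φ : V => (fun i => δ i φ : Fin N → 𝕜))
    (hPr : IsLeastSquaresProjection (fun i : Fin S => δ (Fin.castLE hSN i)) P Pr) :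
    Function.Surjective (serendipityDofs hSN δ Pr) := by
  intro c
  obtain ⟨φ₀, hφ₀⟩ := hδ (glueDofs c 0)
  obtain ⟨φ, hφ⟩ := hδ (glueDofs c fun r => δ r (Pr φ₀))
  have hdofs : ∀ i : Fin S, δ (Fin.castLE hSN i) φ = c i := fun i => by
    rw [← glueDofs_castLE hSN c _ i, ← hφ]
  have hdofs₀ : ∀ i : Fin S, δ (Fin.castLE hSN i) φ₀ = c i := fun i => by
    rw [← glueDofs_castLE hSN c 0 i, ← hφ₀]
  have hPrφ : Pr φ = Pr φ₀ := hPr.apply_eq_of_dofs_eq fun i => by rw [hdofs, hdofs₀]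
  have hφW : φ ∈ serendipitySpace δ S Pr := fun r hr => by
    rw [hPrφ, ← glueDofs_of_le c (fun r => δ r (Pr φ₀)) hr, ← hφ]
  exact ⟨⟨φ, hφW⟩, funext hdofs⟩

end Serendipity

theorem stmt_18_general (V : Type*) [AddCommGroup V] [Module ℝ V]
    (N S : ℕ) (hSN : S ≤ N) (δ : Fin N → (V →ₗ[ℝ] ℝ))
    (hiso : Function.Bijective fun φ : V => (fun i => δ i φ : Fin N → ℝ))
    (P : Submodule ℝ V)
    (hinj : ∀ q ∈ P, (∀ i : Fin S, δ (Fin.castLE hSN i) q = 0) → q = 0)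
    (Pr : V →ₗ[ℝ] V) (hPrP : ∀ φ : V, Pr φ ∈ P)
    (hproj : ∀ φ : V, ∀ q ∈ P,
      ∑ i : Fin S, δ (Fin.castLE hSN i) (Pr φ - φ) * δ (Fin.castLE hSN i) q = 0) :
    ∃ W : Submodule ℝ V,
      (W : Set V) = {φ : V | ∀ r : Fin N, S ≤ (r : ℕ) → δ r φ = δ r (Pr φ)} ∧
      Module.finrank ℝ W = S ∧ P ≤ W ∧
      Function.Bijective fun φ : W => (fun i => δ (Fin.castLE hSN i) (φ : V) : Fin S → ℝ) := by
  have hPr : IsLeastSquaresProjection (fun i : Fin S => δ (Fin.castLE hSN i)) P Pr :=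
    ⟨hinj, hPrP, hproj⟩
  have hbij : Function.Bijective (serendipityDofs hSN δ Pr) :=
    ⟨serendipityDofs_injective hSN hiso.1 hPr, serendipityDofs_surjective hSN hiso.2 hPr⟩
  refine ⟨serendipitySpace δ S Pr, rfl, ?_, hPr.le_serendipitySpace hSN, hbij⟩
  rw [(LinearEquiv.ofBijective _ hbij).finrank_eq, finrank_fin_fun]

/-- The reduced (serendipity) space V^S = {φ : δ_r(φ) = δ_r(Πφ) for r > S} is a
subspace of dimension S containing P, and the first S degrees of freedom are an
isomorphism from V^S onto ℝ^S. -/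
theorem stmt_18 (V : Type*) [AddCommGroup V] [Module ℝ V] [FiniteDimensional ℝ V]
    (N S : ℕ) (hSN : S ≤ N) (δ : Fin N → (V →ₗ[ℝ] ℝ))
    (hiso : Function.Bijective fun φ : V => (fun i => δ i φ : Fin N → ℝ))
    (P : Submodule ℝ V)
    (hinj : ∀ q ∈ P, (∀ i : Fin S, δ (Fin.castLE hSN i) q = 0) → q = 0)
    (Pr : V →ₗ[ℝ] V) (hPrP : ∀ φ : V, Pr φ ∈ P)
    (hproj : ∀ φ : V, ∀ q ∈ P,
      ∑ i : Fin S, δ (Fin.castLE hSN i) (Pr φ - φ) * δ (Fin.castLE hSN i) q = 0) :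
    ∃ W : Submodule ℝ V,
      (W : Set V) = {φ : V | ∀ r : Fin N, S ≤ (r : ℕ) → δ r φ = δ r (Pr φ)} ∧
      Module.finrank ℝ W = S ∧ P ≤ W ∧
      Function.Bijective fun φ : W => (fun i => δ (Fin.castLE hSN i) (φ : V) : Fin S → ℝ) :=
  stmt_18_general V N S hSN δ hiso P hinj Pr hPrP hproj
end

section
/- With notation as above, the unisolvence of the reduced degrees of freedom holds: if φ ∈ V^S and δ₁(φ) = … = δ_S(φ) = 0, then φ = 0. -/
/-! The least-squares conditions tested against `q = Π φ` say `∑ δᵢ(Π φ - φ) δᵢ(Π φ) = 0`; when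
`δᵢ φ = 0` for `i ≤ S` this is `∑ δᵢ(Π φ)² = 0`, so `Π φ ∈ P` has vanishing reduced degrees of
freedom and is therefore `0`. The defining relations of `V^S` then make all `N` degrees of freedom
of `φ` vanish. -/

lemma LinearMap.apply_eq_zero_of_sum_mul_sub_eq_zero {ι V : Type*} [Fintype ι] [AddCommGroup V]
    [Module ℝ V] (ℓ : ι → V →ₗ[ℝ] ℝ) {φ ψ : V} (horth : ∑ i, ℓ i (ψ - φ) * ℓ i ψ = 0)
    (hφ : ∀ i, ℓ i φ = 0) (i : ι) : ℓ i ψ = 0 := by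
  have hsq : ∑ j, ℓ j ψ * ℓ j ψ = 0 := by simpa only [map_sub, hφ, sub_zero] using horth
  exact (Finset.sum_mul_self_eq_zero_iff _ _).mp hsq i (Finset.mem_univ i)

theorem stmt_19_general (V : Type*) [AddCommGroup V] [Module ℝ V]
    (N S : ℕ) (hSN : S ≤ N) (δ : Fin N → (V →ₗ[ℝ] ℝ))
    (hiso : Function.Bijective fun φ : V => (fun i => δ i φ : Fin N → ℝ))
    (P : Submodule ℝ V)
    (hinj : ∀ q ∈ P, (∀ i : Fin S, δ (Fin.castLE hSN i) q = 0) → q = 0)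
    (Pr : V →ₗ[ℝ] V) (hPrP : ∀ φ : V, Pr φ ∈ P)
    (hproj : ∀ φ : V, ∀ q ∈ P,
      ∑ i : Fin S, δ (Fin.castLE hSN i) (Pr φ - φ) * δ (Fin.castLE hSN i) q = 0)
    (φ : V)
    (hφ : ∀ r : Fin N, S ≤ (r : ℕ) → δ r φ = δ r (Pr φ))
    (hzero : ∀ i : Fin S, δ (Fin.castLE hSN i) φ = 0) :
    φ = 0 := by
  have hPr : Pr φ = 0 := hinj _ (hPrP φ)
    (LinearMap.apply_eq_zero_of_sum_mul_sub_eq_zero _ (hproj φ _ (hPrP φ)) hzero)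
  refine hiso.injective (funext fun r => ?_)
  simp only [map_zero]
  rcases lt_or_ge (r : ℕ) S with hr | hr
  · exact hzero ⟨r, hr⟩
  · rw [hφ r hr, hPr, map_zero]

/-- Unisolvence of the reduced degrees of freedom: if φ belongs to the
serendipity space V^S and δ₁(φ) = … = δ_S(φ) = 0, then φ = 0. -/
theorem stmt_19 (V : Type*) [AddCommGroup V] [Module ℝ V] [FiniteDimensional ℝ V]
    (N S : ℕ) (hSN : S ≤ N) (δ : Fin N → (V →ₗ[ℝ] ℝ))
    (hiso : Function.Bijective fun φ : V => (fun i => δ i φ : Fin N → ℝ))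
    (P : Submodule ℝ V)
    (hinj : ∀ q ∈ P, (∀ i : Fin S, δ (Fin.castLE hSN i) q = 0) → q = 0)
    (Pr : V →ₗ[ℝ] V) (hPrP : ∀ φ : V, Pr φ ∈ P)
    (hproj : ∀ φ : V, ∀ q ∈ P,
      ∑ i : Fin S, δ (Fin.castLE hSN i) (Pr φ - φ) * δ (Fin.castLE hSN i) q = 0)
    (φ : V)
    (hφ : ∀ r : Fin N, S ≤ (r : ℕ) → δ r φ = δ r (Pr φ))
    (hzero : ∀ i : Fin S, δ (Fin.castLE hSN i) φ = 0) :
    φ = 0 :=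
  stmt_19_general V N S hSN δ hiso P hinj Pr hPrP hproj φ hφ hzero
end
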